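/- arXiv:2502.04907 — 4 statements merged into one kernel-verified Lean document; each statement's English description precedes it below -/
import Mathlib

section
/- Let μ be a probability measure on ℝ^d and let x₁, …, x_K be distinct points of ℝ^d. Then the minimum over probability vectors a ∈ Σ_K of W₂²(μ, ∑ₖ aₖ δ_{xₖ}) equals ∫_{ℝ^d} min_{1≤k≤K} ‖xₖ − y‖² dμ(y), and this minimum is attained by the weights aₖ = μ(Uₖ), where (Uₖ)ₖ is a measurable partition of ℝ^d such that y ∈ Uₖ implies ‖xₖ − y‖ = min_j ‖x_j − y‖. -/
open MeasureTheory Set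
open scoped ENNReal

/-!
Any coupling of `μ` with a measure carried by `{x₁, …, x_K}` moves each `y` to some `xₖ`,
at cost at least `minₖ c(y, xₖ)`. Conversely, sending each cell `Uₖ` of a partition
subordinate to the Voronoï cells to `xₖ` is a coupling of `μ` with `∑ₖ μ(Uₖ) δ_{xₖ}`
whose cost is exactly `∫ minₖ c(y, xₖ) dμ(y)`.
-/

/-- Squared 2-Wasserstein distance (as an extended real), defined as the infimum over
couplings of the integral of the squared distance. -/
noncomputable def W2sq {E : Type*} [MeasurableSpace E] [PseudoMetricSpace E]
    (μ ν : Measure E) : ℝ≥0∞ :=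
  ⨅ π : {π : Measure (E × E) // π.map Prod.fst = μ ∧ π.map Prod.snd = ν},
    ∫⁻ p, ENNReal.ofReal (dist p.1 p.2 ^ 2) ∂(π : Measure (E × E))

namespace SemiDiscreteTransport

variable {E ι : Type*} [MeasurableSpace E]

theorem finset_sum_restrict_of_partition [Fintype ι] {μ : Measure E} {U : ι → Set E}
    (hUmeas : ∀ k, MeasurableSet (U k)) (hUcover : ⋃ k, U k = univ)
    (hUdisj : Pairwise (Function.onFun Disjoint U)) :
    ∑ k, μ.restrict (U k) = μ := by
  rw [← Measure.sum_fintype, ← Measure.restrict_iUnion hUdisj hUmeas, hUcover,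
    Measure.restrict_univ]

theorem lintegral_iInf_le_of_map_snd {c : E × E → ℝ≥0∞} {π : Measure (E × E)} {x : ι → E}
    (hsnd : π.map Prod.snd (range x)ᶜ = 0) :
    ∫⁻ y, ⨅ k, c (y, x k) ∂π.map Prod.fst ≤ ∫⁻ p, c p ∂π := by
  have hae : ∀ᵐ p ∂π, p.2 ∈ range x :=
    nonpos_iff_eq_zero.mp (hsnd ▸ Measure.le_map_apply measurable_snd.aemeasurable _)
  calc ∫⁻ y, ⨅ k, c (y, x k) ∂π.map Prod.fst
      ≤ ∫⁻ p, ⨅ k, c (p.1, x k) ∂π := lintegral_map_le _ _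
    _ ≤ ∫⁻ p, c p ∂π := lintegral_mono_ae <| hae.mono fun p ⟨k, hk⟩ =>
        (iInf_le _ k).trans_eq (by rw [hk])

theorem finset_sum_smul_dirac_compl_range [MeasurableSingletonClass E] [Fintype ι]
    (w : ι → ℝ≥0∞) (x : ι → E) :
    (∑ k, w k • Measure.dirac (x k)) (range x)ᶜ = 0 := by
  simp [Measure.dirac_apply' _ (finite_range x).measurableSet.compl]

noncomputable def cellCoupling [Fintype ι] (μ : Measure E) (U : ι → Set E) (x : ι → E) :
    Measure (E × E) :=
  ∑ k, (μ.restrict (U k)).map (fun y => (y, x k))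

variable [Fintype ι] {μ : Measure E} {U : ι → Set E} {x : ι → E}

theorem map_fst_cellCoupling (hU : ∑ k, μ.restrict (U k) = μ) :
    (cellCoupling μ U x).map Prod.fst = μ := by
  rw [cellCoupling, Measure.map_finset_sum' measurable_fst.aemeasurable]
  conv_rhs => rw [← hU]
  refine Finset.sum_congr rfl fun k _ => ?_
  rw [Measure.map_map measurable_fst (by fun_prop)]
  exact Measure.map_id

theorem map_snd_cellCoupling :
    (cellCoupling μ U x).map Prod.snd = ∑ k, μ (U k) • Measure.dirac (x k) := by
  rw [cellCoupling, Measure.map_finset_sum' measurable_snd.aemeasurable]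
  refine Finset.sum_congr rfl fun k _ => ?_
  rw [Measure.map_map measurable_snd (by fun_prop), Function.comp_def, Measure.map_const,
    Measure.restrict_apply_univ]

theorem lintegral_cellCoupling {c : E × E → ℝ≥0∞} (hc : Measurable c)
    (hUmeas : ∀ k, MeasurableSet (U k)) (hU : ∑ k, μ.restrict (U k) = μ)
    (hUvor : ∀ k, ∀ y ∈ U k, ∀ j, c (y, x k) ≤ c (y, x j)) :
    ∫⁻ p, c p ∂cellCoupling μ U x = ∫⁻ y, ⨅ k, c (y, x k) ∂μ := by
  conv_rhs => rw [← hU]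
  rw [cellCoupling, lintegral_finsetSum_measure, lintegral_finsetSum_measure]
  refine Finset.sum_congr rfl fun k _ => ?_
  rw [lintegral_map hc (by fun_prop)]
  refine setLIntegral_congr_fun (hUmeas k) fun y hy => ?_
  exact le_antisymm (le_iInf (hUvor k y hy)) (iInf_le _ k)

end SemiDiscreteTransport

namespace W2sq

open SemiDiscreteTransport

variable {E ι : Type*} [MeasurableSpace E] [PseudoMetricSpace E]

theorem lintegral_iInf_le {μ ν : Measure E} {x : ι → E} (hν : ν (range x)ᶜ = 0) :
    ∫⁻ y, ⨅ k, ENNReal.ofReal (dist y (x k) ^ 2) ∂μ ≤ W2sq μ ν :=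
  le_iInf fun ⟨π, hfst, hsnd⟩ => hfst ▸
    lintegral_iInf_le_of_map_snd (c := fun p => ENNReal.ofReal (dist p.1 p.2 ^ 2)) (hsnd ▸ hν)

theorem le_lintegral_of_marginals {μ ν : Measure E} (π : Measure (E × E))
    (hfst : π.map Prod.fst = μ) (hsnd : π.map Prod.snd = ν) :
    W2sq μ ν ≤ ∫⁻ p, ENNReal.ofReal (dist p.1 p.2 ^ 2) ∂π :=
  iInf_le_of_le ⟨π, hfst, hsnd⟩ le_rfl

theorem cellWeights_le_lintegral_iInf [OpensMeasurableSpace E] [SecondCountableTopology E]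
    [Fintype ι] {μ : Measure E} {U : ι → Set E} {x : ι → E}
    (hUmeas : ∀ k, MeasurableSet (U k)) (hU : ∑ k, μ.restrict (U k) = μ)
    (hUvor : ∀ k, ∀ y ∈ U k, ∀ j, dist y (x k) ≤ dist y (x j)) :
    W2sq μ (∑ k, μ (U k) • Measure.dirac (x k)) ≤
      ∫⁻ y, ⨅ k, ENNReal.ofReal (dist y (x k) ^ 2) ∂μ := by
  refine (le_lintegral_of_marginals _ (map_fst_cellCoupling hU)
    map_snd_cellCoupling).trans_eq ?_
  refine lintegral_cellCoupling (by fun_prop) hUmeas hU fun k y hy j => ?_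
  exact ENNReal.ofReal_le_ofReal (pow_le_pow_left₀ dist_nonneg (hUvor k y hy j) 2)

end W2sq

open SemiDiscreteTransport in
theorem stmt_3_general {d : ℕ} (K : ℕ)
    (μ : Measure (EuclideanSpace ℝ (Fin d)))
    (x : Fin K → EuclideanSpace ℝ (Fin d))
    (U : Fin K → Set (EuclideanSpace ℝ (Fin d)))
    (hUmeas : ∀ k, MeasurableSet (U k))
    (hUcover : (⋃ k, U k) = univ)
    (hUdisj : Pairwise (Function.onFun Disjoint U))
    (hUvor : ∀ k, ∀ y ∈ U k, ∀ j, ‖x k - y‖ ≤ ‖x j - y‖) :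
    (∀ a : Fin K → ℝ, (∀ k, 0 ≤ a k) → (∑ k, a k = 1) →
        (∫⁻ y, ⨅ k, ENNReal.ofReal (‖x k - y‖ ^ 2) ∂μ) ≤
          W2sq μ (∑ k, ENNReal.ofReal (a k) • Measure.dirac (x k))) ∧
      W2sq μ (∑ k, μ (U k) • Measure.dirac (x k)) =
        ∫⁻ y, ⨅ k, ENNReal.ofReal (‖x k - y‖ ^ 2) ∂μ := by
  have hnorm : ∀ k y, ‖x k - y‖ = dist y (x k) := fun k y => by rw [dist_comm, dist_eq_norm]
  simp only [hnorm] at hUvor ⊢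
  have hU := finset_sum_restrict_of_partition (μ := μ) hUmeas hUcover hUdisj
  refine ⟨fun a _ _ => W2sq.lintegral_iInf_le (finset_sum_smul_dirac_compl_range _ x), ?_⟩
  exact (W2sq.cellWeights_le_lintegral_iInf hUmeas hU hUvor).antisymm
    (W2sq.lintegral_iInf_le (finset_sum_smul_dirac_compl_range _ x))

/-- for distinct points `x₁,…,x_K`, the minimum over probability vectors
`a ∈ Σ_K` of `W₂²(μ, ∑ₖ aₖ δ_{xₖ})` equals `∫ minₖ ‖xₖ − y‖² dμ(y)`, and it is attained at
the weights `aₖ = μ(Uₖ)` for a measurable partition `(Uₖ)` subordinate to the Voronoï cells. -/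
theorem stmt_3 {d : ℕ} (K : ℕ) (hK : 0 < K)
    (μ : Measure (EuclideanSpace ℝ (Fin d))) [IsProbabilityMeasure μ]
    (x : Fin K → EuclideanSpace ℝ (Fin d)) (hx : Function.Injective x)
    (U : Fin K → Set (EuclideanSpace ℝ (Fin d)))
    (hUmeas : ∀ k, MeasurableSet (U k))
    (hUcover : (⋃ k, U k) = univ)
    (hUdisj : Pairwise (Function.onFun Disjoint U))
    (hUvor : ∀ k, ∀ y ∈ U k, ∀ j, ‖x k - y‖ ≤ ‖x j - y‖) :
    (∀ a : Fin K → ℝ, (∀ k, 0 ≤ a k) → (∑ k, a k = 1) →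
        (∫⁻ y, ⨅ k, ENNReal.ofReal (‖x k - y‖ ^ 2) ∂μ) ≤
          W2sq μ (∑ k, ENNReal.ofReal (a k) • Measure.dirac (x k))) ∧
      W2sq μ (∑ k, μ (U k) • Measure.dirac (x k)) =
        ∫⁻ y, ⨅ k, ENNReal.ofReal (‖x k - y‖ ^ 2) ∂μ :=
  stmt_3_general K μ x U hUmeas hUcover hUdisj hUvor
end

section
/- Let μ⁽¹⁾, …, μ⁽ᴺ⁾ be probability measures on a compact set 𝒳 ⊂ ℝ^d with finite second moments and let μ̄ = (1/N) ∑ᵢ μ⁽ⁱ⁾ be their mean measure. Then for any distinct points x₁, …, x_K with associated Voronoï partition (Uₖ)ₖ, the average (1/N) ∑ᵢ W₂²( ∑ₖ μ⁽ⁱ⁾(Uₖ) δ_{xₖ}, μ⁽ⁱ⁾ ) equals W₂²( ∑ₖ μ̄(Uₖ) δ_{xₖ}, μ̄ ). In particular, minimizing over weight vectors and locations the average Wasserstein quantization error of the N measures with common support of size K is equivalent to the K-point optimal quantization of the mean measure μ̄. -/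
open MeasureTheory Set
open scoped ENNReal

/-!
Transporting `μ` along its Voronoï projection `y ↦ x (κ y)` (where `y ∈ U (κ y)`) is a coupling of
`∑ₖ μ(Uₖ) δ_{xₖ}` with `μ` of cost `∫ d(y, {xₖ})² dμ`, and no coupling can do better because the
first marginal lives on `{xₖ}`. So `W₂²(∑ₖ μ(Uₖ) δ_{xₖ}, μ) = ∫ d(y, {xₖ})² dμ(y)`, which is linear
in `μ`; averaging over `μ⁽¹⁾, …, μ⁽ᴺ⁾` gives the value at `μ̄`.
-/

theorem exists_preimage_singleton_eq_of_iUnion_eq_univ {α ι : Type*} {U : ι → Set α}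
    (hcover : ⋃ k, U k = univ) (hdisj : Pairwise (Function.onFun Disjoint U)) :
    ∃ κ : α → ι, ∀ k, κ ⁻¹' {k} = U k := by
  choose κ hκ using fun y => mem_iUnion.1 (hcover ▸ mem_univ y)
  refine ⟨κ, fun k => Set.ext fun y => ⟨fun h => (h : κ y = k) ▸ hκ y, fun hy => ?_⟩⟩
  by_contra hne
  exact disjoint_left.1 (hdisj hne) (hκ y) hy

theorem MeasureTheory.Measure.map_comp_eq_sum_smul_dirac {α β ι : Type*} [MeasurableSpace α]
    [MeasurableSpace β] [Fintype ι] [MeasurableSpace ι] [MeasurableSingletonClass ι]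
    {κ : α → ι} (hκ : Measurable κ) (x : ι → β) (μ : Measure α) :
    μ.map (x ∘ κ) = ∑ k, μ (κ ⁻¹' {k}) • Measure.dirac (x k) := by
  classical
  ext s hs
  rw [Measure.map_apply ((measurable_of_finite x).comp hκ) hs, Measure.finsetSum_apply]
  simp only [Measure.smul_apply, Measure.dirac_apply' _ hs, indicator_apply, Pi.one_apply,
    smul_eq_mul, mul_ite, mul_one, mul_zero]
  rw [← Finset.sum_filter,
    sum_measure_preimage_singleton _ fun k _ => hκ (measurableSet_singleton k)]
  congr 1
  ext y
  simp

section Coupling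

variable {E : Type*} [PseudoMetricSpace E] [MeasurableSpace E]

theorem W2sq_map_le_lintegral {T : E → E} (hT : Measurable T) (μ : Measure E) :
    W2sq (μ.map T) μ ≤ ∫⁻ y, ENNReal.ofReal (dist (T y) y ^ 2) ∂μ := by
  have hpair : Measurable fun y => (T y, y) := hT.prodMk measurable_id
  have hfst : (μ.map fun y => (T y, y)).map Prod.fst = μ.map T := by
    rw [Measure.map_map measurable_fst hpair]; rfl
  have hsnd : (μ.map fun y => (T y, y)).map Prod.snd = μ := by
    rw [Measure.map_map measurable_snd hpair]; exact Measure.map_id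
  exact iInf_le_of_le ⟨_, hfst, hsnd⟩ (lintegral_map_le _ _)

theorem lintegral_infDist_sq_le_W2sq [OpensMeasurableSpace E] {A : Set E} {ν : Measure E}
    (hν : ν Aᶜ = 0) (μ : Measure E) :
    ∫⁻ y, ENNReal.ofReal (Metric.infDist y A ^ 2) ∂μ ≤ W2sq ν μ := by
  refine le_iInf fun ⟨π, hfst, hsnd⟩ => ?_
  subst hsnd
  have hA : ∀ᵐ p ∂π, p.1 ∈ A := ae_iff.2 <| nonpos_iff_eq_zero.1 <|
    (Measure.le_map_apply measurable_fst.aemeasurable Aᶜ).trans (hfst ▸ hν).le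
  have hmeas : Measurable fun y => ENNReal.ofReal (Metric.infDist y A ^ 2) :=
    ((Metric.continuous_infDist_pt A).pow 2).measurable.ennreal_ofReal
  rw [lintegral_map hmeas measurable_snd]
  refine lintegral_mono_ae (hA.mono fun p hp => ENNReal.ofReal_le_ofReal ?_)
  rw [dist_comm]
  exact pow_le_pow_left₀ Metric.infDist_nonneg (Metric.infDist_le_dist_of_mem hp) 2

end Coupling

theorem infDist_range_eq_dist_of_forall_le {E ι : Type*} [PseudoMetricSpace E] {x : ι → E}
    {y : E} {k : ι} (hk : ∀ j, dist (x k) y ≤ dist (x j) y) :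
    Metric.infDist y (range x) = dist (x k) y := by
  refine le_antisymm (dist_comm y (x k) ▸ Metric.infDist_le_dist_of_mem ⟨k, rfl⟩) ?_
  refine (Metric.le_infDist (s := range x) ⟨x k, mem_range_self k⟩).2
    (forall_mem_range.2 fun j => ?_)
  rw [dist_comm y]
  exact hk j

section Voronoi

variable {E ι : Type*} [MetricSpace E] [MeasurableSpace E] [OpensMeasurableSpace E]

theorem measure_compl_range_sum_smul_dirac [Fintype ι] (c : ι → ℝ≥0∞) (x : ι → E) :
    (∑ k, c k • Measure.dirac (x k)) (range x)ᶜ = 0 := by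
  rw [Measure.finsetSum_apply]
  refine Finset.sum_eq_zero fun k _ => ?_
  rw [Measure.smul_apply, Measure.dirac_apply' _ (finite_range x).measurableSet.compl,
    indicator_of_notMem (not_not.2 (mem_range_self k)), smul_zero]

theorem W2sq_voronoi_eq_lintegral_infDist [Fintype ι] (x : ι → E) (U : ι → Set E)
    (hUmeas : ∀ k, MeasurableSet (U k)) (hUcover : ⋃ k, U k = univ)
    (hUdisj : Pairwise (Function.onFun Disjoint U))
    (hUvor : ∀ k, ∀ y ∈ U k, ∀ j, dist (x k) y ≤ dist (x j) y) (μ : Measure E) :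
    W2sq (∑ k, μ (U k) • Measure.dirac (x k)) μ =
      ∫⁻ y, ENNReal.ofReal (Metric.infDist y (range x) ^ 2) ∂μ := by
  let _ : MeasurableSpace ι := ⊤
  have _ : DiscreteMeasurableSpace ι := ⟨fun _ => trivial⟩
  obtain ⟨κ, hκ⟩ := exists_preimage_singleton_eq_of_iUnion_eq_univ hUcover hUdisj
  have hκm : Measurable κ := measurable_to_countable' fun k => hκ k ▸ hUmeas k
  have hproj : μ.map (x ∘ κ) = ∑ k, μ (U k) • Measure.dirac (x k) := by
    simpa only [hκ] using Measure.map_comp_eq_sum_smul_dirac hκm x μ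
  refine le_antisymm ?_
    (lintegral_infDist_sq_le_W2sq (measure_compl_range_sum_smul_dirac _ x) μ)
  rw [← hproj]
  refine (W2sq_map_le_lintegral ((measurable_of_finite x).comp hκm) μ).trans_eq
    (lintegral_congr fun y => ?_)
  have hy : y ∈ U (κ y) := hκ (κ y) ▸ rfl
  rw [Function.comp_apply, infDist_range_eq_dist_of_forall_le (hUvor _ y hy)]

end Voronoi

theorem stmt_4_general {d : ℕ} (N K : ℕ)
    (μ : Fin N → Measure (EuclideanSpace ℝ (Fin d)))
    (μbar : Measure (EuclideanSpace ℝ (Fin d)))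
    (hμbar : μbar = (N : ℝ≥0∞)⁻¹ • ∑ i, μ i)
    (x : Fin K → EuclideanSpace ℝ (Fin d))
    (U : Fin K → Set (EuclideanSpace ℝ (Fin d)))
    (hUmeas : ∀ k, MeasurableSet (U k))
    (hUcover : (⋃ k, U k) = univ)
    (hUdisj : Pairwise (Function.onFun Disjoint U))
    (hUvor : ∀ k, ∀ y ∈ U k, ∀ j, ‖x k - y‖ ≤ ‖x j - y‖) :
    (N : ℝ≥0∞)⁻¹ * ∑ i, W2sq (∑ k, (μ i) (U k) • Measure.dirac (x k)) (μ i) =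
      W2sq (∑ k, μbar (U k) • Measure.dirac (x k)) μbar := by
  have hquant := W2sq_voronoi_eq_lintegral_infDist x U hUmeas hUcover hUdisj
    (by simpa only [dist_eq_norm] using hUvor)
  simp only [hquant, hμbar, lintegral_smul_measure, lintegral_finsetSum_measure]
  rfl

/-- for probability measures `μ⁽¹⁾,…,μ⁽ᴺ⁾` supported in a compact set
`𝒳 ⊂ ℝ^d` and any distinct points `x₁,…,x_K` with Voronoï partition `(Uₖ)`, the average
quantization error `(1/N) ∑ᵢ W₂²(∑ₖ μ⁽ⁱ⁾(Uₖ) δ_{xₖ}, μ⁽ⁱ⁾)` equals the quantization error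
`W₂²(∑ₖ μ̄(Uₖ) δ_{xₖ}, μ̄)` of the mean measure `μ̄ = (1/N) ∑ᵢ μ⁽ⁱ⁾`. -/
theorem stmt_4 {d : ℕ} (N K : ℕ) (hN : 0 < N) (hK : 0 < K)
    (𝒳 : Set (EuclideanSpace ℝ (Fin d))) (hcomp : IsCompact 𝒳)
    (μ : Fin N → Measure (EuclideanSpace ℝ (Fin d)))
    (hprob : ∀ i, IsProbabilityMeasure (μ i))
    (hsupp : ∀ i, μ i 𝒳ᶜ = 0)
    (μbar : Measure (EuclideanSpace ℝ (Fin d)))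
    (hμbar : μbar = (N : ℝ≥0∞)⁻¹ • ∑ i, μ i)
    (x : Fin K → EuclideanSpace ℝ (Fin d)) (hx : Function.Injective x)
    (U : Fin K → Set (EuclideanSpace ℝ (Fin d)))
    (hUmeas : ∀ k, MeasurableSet (U k))
    (hUcover : (⋃ k, U k) = univ)
    (hUdisj : Pairwise (Function.onFun Disjoint U))
    (hUvor : ∀ k, ∀ y ∈ U k, ∀ j, ‖x k - y‖ ≤ ‖x j - y‖) :
    (N : ℝ≥0∞)⁻¹ * ∑ i, W2sq (∑ k, (μ i) (U k) • Measure.dirac (x k)) (μ i) =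
      W2sq (∑ k, μbar (U k) • Measure.dirac (x k)) μbar :=
  stmt_4_general N K μ μbar hμbar x U hUmeas hUcover hUdisj hUvor
end

section
/- Let (X, d) be a metric space, let μ⁽¹⁾,…,μ⁽ᴺ⁾, ν⁽¹⁾,…,ν⁽ᴺ⁾ ∈ X, and let ε = (1/N) ∑ᵢ d(μ⁽ⁱ⁾, ν⁽ⁱ⁾)². For disjoint subsets I₁, I₂ ⊂ {1,…,N} of cardinalities N₁, N₂, define BCSS(I₁, I₂, μ) = (1/(N₁N₂)) ∑_{i ∈ I₁, j ∈ I₂} d(μ⁽ⁱ⁾, μ⁽ʲ⁾)². Then BCSS(I₁, I₂, ν) ≥ (1/3) BCSS(I₁, I₂, μ) − (N/N₁ + N/N₂) ε. -/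
/-- between-class sum of squares bound
`BCSS(I₁, I₂, ν) ≥ (1/3) BCSS(I₁, I₂, μ) − (N/N₁ + N/N₂) ε`. -/
theorem stmt_8 {X : Type*} [MetricSpace X] (N : ℕ) (hN : 0 < N)
    (μ ν : Fin N → X) (I₁ I₂ : Finset (Fin N)) (h₁ : I₁.Nonempty) (h₂ : I₂.Nonempty)
    (hdisj : Disjoint I₁ I₂) :
    (1 / ((I₁.card : ℝ) * (I₂.card : ℝ))) * ∑ i ∈ I₁, ∑ j ∈ I₂, dist (ν i) (ν j) ^ 2 ≥
      (1 / 3) * ((1 / ((I₁.card : ℝ) * (I₂.card : ℝ))) *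
          ∑ i ∈ I₁, ∑ j ∈ I₂, dist (μ i) (μ j) ^ 2) -
        ((N : ℝ) / (I₁.card : ℝ) + (N : ℝ) / (I₂.card : ℝ)) *
          ((1 / (N : ℝ)) * ∑ i, dist (μ i) (ν i) ^ 2) := by
  set a : ℝ := (I₁.card : ℝ) with ha_def
  set b : ℝ := (I₂.card : ℝ) with hb_def
  have ha : (0:ℝ) < a := by rw [ha_def]; exact_mod_cast h₁.card_pos
  have hb : (0:ℝ) < b := by rw [hb_def]; exact_mod_cast h₂.card_pos
  have hN' : (0:ℝ) < (N:ℝ) := by exact_mod_cast hN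
  set S : ℝ := ∑ i ∈ I₁, ∑ j ∈ I₂, dist (ν i) (ν j) ^ 2 with hS_def
  set T : ℝ := ∑ i ∈ I₁, ∑ j ∈ I₂, dist (μ i) (μ j) ^ 2 with hT_def
  set E : ℝ := ∑ i, dist (μ i) (ν i) ^ 2 with hE_def
  set E₁ : ℝ := ∑ i ∈ I₁, dist (μ i) (ν i) ^ 2 with hE1_def
  set E₂ : ℝ := ∑ j ∈ I₂, dist (μ j) (ν j) ^ 2 with hE2_def
  have hE1 : E₁ ≤ E :=
    Finset.sum_le_sum_of_subset_of_nonneg (Finset.subset_univ _)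
      (fun i _ _ => sq_nonneg _)
  have hE2 : E₂ ≤ E :=
    Finset.sum_le_sum_of_subset_of_nonneg (Finset.subset_univ _)
      (fun i _ _ => sq_nonneg _)
  have hE1nn : 0 ≤ E₁ := Finset.sum_nonneg fun i _ => sq_nonneg _
  have hE2nn : 0 ≤ E₂ := Finset.sum_nonneg fun i _ => sq_nonneg _
  have hT : T ≤ 3 * (b * E₁ + S + a * E₂) := by
    have key : ∀ i ∈ I₁, ∀ j ∈ I₂,
        dist (μ i) (μ j) ^ 2 ≤
          3 * (dist (μ i) (ν i) ^ 2 + dist (ν i) (ν j) ^ 2 + dist (μ j) (ν j) ^ 2) := by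
      intro i _ j _
      have htri : dist (μ i) (μ j) ≤
          dist (μ i) (ν i) + dist (ν i) (ν j) + dist (ν j) (μ j) := by
        calc dist (μ i) (μ j) ≤ dist (μ i) (ν j) + dist (ν j) (μ j) := dist_triangle _ _ _
        _ ≤ (dist (μ i) (ν i) + dist (ν i) (ν j)) + dist (ν j) (μ j) := by
              gcongr; exact dist_triangle _ _ _
      have h1 : 0 ≤ dist (μ i) (μ j) := dist_nonneg
      rw [dist_comm (ν j) (μ j)] at htri
      nlinarith [sq_nonneg (dist (μ i) (ν i) - dist (ν i) (ν j)),
        sq_nonneg (dist (μ i) (ν i) - dist (μ j) (ν j)),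
        sq_nonneg (dist (ν i) (ν j) - dist (μ j) (ν j))]
    calc T ≤ ∑ i ∈ I₁, ∑ j ∈ I₂,
        3 * (dist (μ i) (ν i) ^ 2 + dist (ν i) (ν j) ^ 2 + dist (μ j) (ν j) ^ 2) := by
          apply Finset.sum_le_sum
          intro i hi
          exact Finset.sum_le_sum (key i hi)
    _ = 3 * (b * E₁ + S + a * E₂) := by
          simp only [Finset.mul_sum, mul_add, Finset.sum_add_distrib, Finset.sum_const,
            nsmul_eq_mul, ← Finset.sum_mul, ← Finset.mul_sum]
          rw [hS_def, hE1_def, hE2_def, ha_def, hb_def]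
          push_cast
          ring_nf
  rw [ge_iff_le, ← sub_nonneg]
  have heq : (1 / (a * b)) * S -
      ((1 / 3) * ((1 / (a * b)) * T) - ((N:ℝ) / a + (N:ℝ) / b) * ((1 / (N:ℝ)) * E)) =
      (3 * S - T + 3 * (a + b) * E) / (3 * (a * b)) := by
    field_simp
    ring
  rw [heq]
  apply div_nonneg
  · nlinarith
  · positivity
end

section
/- Let μ and ν be probability measures on ℝ^d supported in a common set of K points {x₁,…,x_K} with respective weight vectors a, b ∈ Σ_K, and let (V₁,…,V_K) be a partition of ℝ^d with xₖ ∈ Vₖ and squared diameter of each Vₖ at most D. Suppose μ' and ν' are probability measures with μ'(Vₖ) = aₖ and ν'(Vₖ) = bₖ for all k. Then W₂²(μ, ν) ≤ 3 W₂²(μ', ν') + 6D. -/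
/-!
Send every point to the centre `xₖ` of its cell `Vₖ`. This map moves points by at most `√D`, so
by the triangle inequality it distorts squared distances by `‖f p - f q‖² ≤ 3‖p - q‖² + 6D`.
It pushes `μ'` and `ν'` forward to `μ` and `ν`, and hence pushes every coupling of `μ'` and `ν'`
forward to a coupling of `μ` and `ν` whose cost is at most three times the original one plus `6D`.
-/

open MeasureTheory Set
open scoped ENNReal

theorem dist_sq_le_three_mul {E : Type*} [PseudoMetricSpace E] (a b c d : E) :
    dist a d ^ 2 ≤ 3 * (dist a b ^ 2 + dist b c ^ 2 + dist c d ^ 2) := by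
  have htri : dist a d ≤ dist a b + dist b c + dist c d := dist_triangle4 a b c d
  have hpow : dist a d ^ 2 ≤ (dist a b + dist b c + dist c d) ^ 2 :=
    pow_le_pow_left₀ dist_nonneg htri 2
  nlinarith [sq_nonneg (dist a b - dist b c), sq_nonneg (dist b c - dist c d),
    sq_nonneg (dist a b - dist c d)]

section W2sq

variable {E : Type*} [MeasurableSpace E] [PseudoMetricSpace E]

theorem W2sq_le_lintegral {μ ν : Measure E} (π : Measure (E × E))
    (hπ₁ : π.map Prod.fst = μ) (hπ₂ : π.map Prod.snd = ν) :
    W2sq μ ν ≤ ∫⁻ p, ENNReal.ofReal (dist p.1 p.2 ^ 2) ∂π :=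
  iInf_le (fun π : {π : Measure (E × E) // π.map Prod.fst = μ ∧ π.map Prod.snd = ν} =>
    ∫⁻ p, ENNReal.ofReal (dist p.1 p.2 ^ 2) ∂(π : Measure (E × E))) ⟨π, hπ₁, hπ₂⟩

theorem W2sq_map_le {f : E → E} (hf : Measurable f) {D : ℝ} (hD : ∀ p, dist (f p) p ^ 2 ≤ D)
    (μ ν : Measure E) :
    W2sq (μ.map f) (ν.map f) ≤ 3 * W2sq μ ν + 6 * ENNReal.ofReal D * μ univ := by
  conv_rhs => rw [W2sq, ENNReal.mul_iInf_of_ne (by norm_num) (by norm_num), ENNReal.iInf_add]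
  refine le_iInf fun ⟨π, hπ₁, hπ₂⟩ => ?_
  have hff : Measurable (Prod.map f f) := hf.prodMap hf
  have hcost : ∀ p : E × E, ENNReal.ofReal (dist (f p.1) (f p.2) ^ 2)
      ≤ 3 * ENNReal.ofReal (dist p.1 p.2 ^ 2) + ENNReal.ofReal (6 * D) := fun p => by
    have h₁ := hD p.1
    have h₂ := hD p.2
    rw [dist_comm] at h₂
    calc ENNReal.ofReal (dist (f p.1) (f p.2) ^ 2)
        ≤ ENNReal.ofReal (3 * dist p.1 p.2 ^ 2 + 6 * D) :=
          ENNReal.ofReal_le_ofReal <| by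
            linarith [dist_sq_le_three_mul (f p.1) p.1 p.2 (f p.2)]
      _ ≤ 3 * ENNReal.ofReal (dist p.1 p.2 ^ 2) + ENNReal.ofReal (6 * D) := by
          rw [← ENNReal.ofReal_ofNat 3, ← ENNReal.ofReal_mul (by norm_num)]
          exact ENNReal.ofReal_add_le
  have hπuniv : π univ = μ univ := by
    rw [← hπ₁, Measure.map_apply measurable_fst MeasurableSet.univ, preimage_univ]
  calc W2sq (μ.map f) (ν.map f)
      ≤ ∫⁻ p, ENNReal.ofReal (dist p.1 p.2 ^ 2) ∂(π.map (Prod.map f f)) := by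
        refine W2sq_le_lintegral _ ?_ ?_
        · rw [Measure.map_map measurable_fst hff, ← hπ₁, Measure.map_map hf measurable_fst]
          rfl
        · rw [Measure.map_map measurable_snd hff, ← hπ₂, Measure.map_map hf measurable_snd]
          rfl
    _ ≤ ∫⁻ p, ENNReal.ofReal (dist (f p.1) (f p.2) ^ 2) ∂π := lintegral_map_le _ _
    _ ≤ ∫⁻ p, (3 * ENNReal.ofReal (dist p.1 p.2 ^ 2) + ENNReal.ofReal (6 * D)) ∂π :=
        lintegral_mono hcost
    _ = 3 * ∫⁻ p, ENNReal.ofReal (dist p.1 p.2 ^ 2) ∂π + 6 * ENNReal.ofReal D * μ univ := by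
        rw [lintegral_add_right _ measurable_const, lintegral_const_mul' _ _ (by norm_num),
          lintegral_const, hπuniv, ENNReal.ofReal_mul (by norm_num), ENNReal.ofReal_ofNat]

end W2sq

section Partition

variable {ι E : Type*} {V : ι → Set E}

noncomputable def cellIndex (hV : ⋃ i, V i = univ) (p : E) : ι :=
  (mem_iUnion.1 (hV ▸ mem_univ p : p ∈ ⋃ i, V i)).choose

theorem mem_cellIndex (hV : ⋃ i, V i = univ) (p : E) : p ∈ V (cellIndex hV p) :=
  (mem_iUnion.1 (hV ▸ mem_univ p : p ∈ ⋃ i, V i)).choose_spec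

theorem cellIndex_eq_of_mem (hV : ⋃ i, V i = univ) (hdisj : Pairwise (Function.onFun Disjoint V))
    {p : E} {i : ι} (hp : p ∈ V i) : cellIndex hV p = i := by
  by_contra hne
  exact (hdisj hne).le_bot ⟨mem_cellIndex hV p, hp⟩

theorem preimage_cellIndex (hV : ⋃ i, V i = univ) (hdisj : Pairwise (Function.onFun Disjoint V))
    (s : Set ι) : cellIndex hV ⁻¹' s = ⋃ i ∈ s, V i := by
  ext p
  simp only [mem_preimage, mem_iUnion, exists_prop]
  exact ⟨fun h => ⟨_, h, mem_cellIndex hV p⟩,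
    fun ⟨i, hi, hp⟩ => cellIndex_eq_of_mem hV hdisj hp ▸ hi⟩

variable [MeasurableSpace E]

theorem measurable_comp_cellIndex [Countable ι] (hV : ⋃ i, V i = univ)
    (hdisj : Pairwise (Function.onFun Disjoint V)) (hmeas : ∀ i, MeasurableSet (V i))
    {F : Type*} [MeasurableSpace F] (x : ι → F) : Measurable (x ∘ cellIndex hV) := by
  intro S _
  rw [preimage_comp, preimage_cellIndex hV hdisj]
  exact MeasurableSet.biUnion (to_countable _) fun i _ => hmeas i

theorem map_comp_cellIndex [Fintype ι] (hV : ⋃ i, V i = univ)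
    (hdisj : Pairwise (Function.onFun Disjoint V)) (hmeas : ∀ i, MeasurableSet (V i))
    (x : ι → E) (m : Measure E) :
    m.map (x ∘ cellIndex hV) = ∑ i, m (V i) • Measure.dirac (x i) := by
  ext S hS
  rw [Measure.map_apply (measurable_comp_cellIndex hV hdisj hmeas x) hS, preimage_comp,
    preimage_cellIndex hV hdisj, measure_biUnion (to_countable _) (fun i _ j _ hij => hdisj hij)
      (fun i _ => hmeas i), tsum_subtype (x ⁻¹' S) fun i => m (V i), tsum_fintype]
  simp only [Measure.coe_finsetSum, Finset.sum_apply, Measure.smul_apply,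
    Measure.dirac_apply' _ hS, smul_eq_mul]
  refine Finset.sum_congr rfl fun i _ => ?_
  by_cases hi : x i ∈ S <;> simp [hi]

end Partition

theorem stmt_18_general {d : ℕ} (K : ℕ)
    (x : Fin K → EuclideanSpace ℝ (Fin d)) (a b : Fin K → ℝ)
    (V : Fin K → Set (EuclideanSpace ℝ (Fin d)))
    (hVmeas : ∀ k, MeasurableSet (V k))
    (hVcover : (⋃ k, V k) = univ)
    (hVdisj : Pairwise (Function.onFun Disjoint V))
    (hxV : ∀ k, x k ∈ V k)
    (D : ℝ) (hD : ∀ k, ∀ p ∈ V k, ∀ q ∈ V k, dist p q ^ 2 ≤ D)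
    (μ ν : Measure (EuclideanSpace ℝ (Fin d)))
    (hμ : μ = ∑ k, ENNReal.ofReal (a k) • Measure.dirac (x k))
    (hν : ν = ∑ k, ENNReal.ofReal (b k) • Measure.dirac (x k))
    (μ' ν' : Measure (EuclideanSpace ℝ (Fin d)))
    (hμ'p : IsProbabilityMeasure μ')
    (hμ' : ∀ k, μ' (V k) = ENNReal.ofReal (a k))
    (hν' : ∀ k, ν' (V k) = ENNReal.ofReal (b k)) :
    W2sq μ ν ≤ 3 * W2sq μ' ν' + 6 * ENNReal.ofReal D := by
  set f := x ∘ cellIndex hVcover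
  have hf : Measurable f := measurable_comp_cellIndex hVcover hVdisj hVmeas x
  have hdisp : ∀ p, dist (f p) p ^ 2 ≤ D := fun p =>
    hD _ _ (hxV _) _ (mem_cellIndex hVcover p)
  have hμf : μ = μ'.map f := by
    rw [map_comp_cellIndex hVcover hVdisj hVmeas, hμ]
    simp only [hμ']
  have hνf : ν = ν'.map f := by
    rw [map_comp_cellIndex hVcover hVdisj hVmeas, hν]
    simp only [hν']
  calc W2sq μ ν = W2sq (μ'.map f) (ν'.map f) := by rw [hμf, hνf]
    _ ≤ 3 * W2sq μ' ν' + 6 * ENNReal.ofReal D * μ' univ := W2sq_map_le hf hdisp μ' ν'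
    _ = 3 * W2sq μ' ν' + 6 * ENNReal.ofReal D := by rw [measure_univ, mul_one]

/-- if `μ, ν` are supported on `K` points `xₖ` with weights `a, b ∈ Σ_K`,
`(Vₖ)` is a partition with `xₖ ∈ Vₖ` and squared diameter at most `D`, and `μ', ν'` are
probability measures with `μ'(Vₖ) = aₖ`, `ν'(Vₖ) = bₖ`, then
`W₂²(μ, ν) ≤ 3 W₂²(μ', ν') + 6D`. -/
theorem stmt_18 {d : ℕ} (K : ℕ) (hK : 0 < K)
    (x : Fin K → EuclideanSpace ℝ (Fin d)) (a b : Fin K → ℝ)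
    (ha : ∀ k, 0 ≤ a k) (hb : ∀ k, 0 ≤ b k) (hsa : ∑ k, a k = 1) (hsb : ∑ k, b k = 1)
    (V : Fin K → Set (EuclideanSpace ℝ (Fin d)))
    (hVmeas : ∀ k, MeasurableSet (V k))
    (hVcover : (⋃ k, V k) = univ)
    (hVdisj : Pairwise (Function.onFun Disjoint V))
    (hxV : ∀ k, x k ∈ V k)
    (D : ℝ) (hD : ∀ k, ∀ p ∈ V k, ∀ q ∈ V k, dist p q ^ 2 ≤ D)
    (μ ν : Measure (EuclideanSpace ℝ (Fin d)))
    (hμ : μ = ∑ k, ENNReal.ofReal (a k) • Measure.dirac (x k))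
    (hν : ν = ∑ k, ENNReal.ofReal (b k) • Measure.dirac (x k))
    (μ' ν' : Measure (EuclideanSpace ℝ (Fin d)))
    (hμ'p : IsProbabilityMeasure μ') (hν'p : IsProbabilityMeasure ν')
    (hμ' : ∀ k, μ' (V k) = ENNReal.ofReal (a k))
    (hν' : ∀ k, ν' (V k) = ENNReal.ofReal (b k)) :
    W2sq μ ν ≤ 3 * W2sq μ' ν' + 6 * ENNReal.ofReal D :=
  stmt_18_general K x a b V hVmeas hVcover hVdisj hxV D hD μ ν hμ hν μ' ν' hμ'p hμ' hν'
end
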